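/- arXiv:1611.04624 — 5 statements merged into one kernel-verified Lean document; each statement's English description precedes it below -/
import Mathlib

section
/- Every nontrivial finitely generated normal subgroup of a finitely generated nonabelian free group has finite index. -/
set_option linter.unusedSectionVars false
namespace FGNormal

open FreeGroup List

variable {α : Type*} [DecidableEq α]

/-- A word has no adjacent cancelling pair. -/
def NoInv (L : List (α × Bool)) : Prop :=
  ∀ (P S : List (α × Bool)) (x : α) (b : Bool), L ≠ P ++ (x, b) :: (x, !b) :: S

theorem noInv_of_reduced {L : List (α × Bool)} (h : FreeGroup.reduce L = L) : NoInv L := by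
  intro P S x b hL
  exact FreeGroup.reduce.not (by rw [h, hL])

theorem reduced_of_noInv {L : List (α × Bool)} (h : NoInv L) : FreeGroup.reduce L = L := by
  rcases (Relation.ReflTransGen.cases_head (FreeGroup.Red.reduce_left (Relation.ReflTransGen.refl (r := FreeGroup.Red.Step) (a := L)))) with h1 | ⟨L', hstep, _⟩
  · exact h1.symm
  · exfalso
    cases hstep with
    | not => exact h _ _ _ _ rfl

theorem noInv_infix {L M : List (α × Bool)} (hM : M <:+: L) (h : NoInv L) : NoInv M := by
  rintro P S x b rfl
  obtain ⟨s, t, rfl⟩ := hM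
  exact h (s ++ P) (S ++ t) x b (by simp)

theorem noInv_toWord (x : FreeGroup α) : NoInv x.toWord :=
  noInv_of_reduced (FreeGroup.reduce_toWord x)

/-- splitting a 2-letter pattern across an append -/
theorem append_eq_pattern_split {X Y P S : List (α × Bool)} {u v : α × Bool}
    (h : X ++ Y = P ++ u :: v :: S) :
    (∃ P' S', X = P' ++ u :: v :: S') ∨ (∃ P' S', Y = P' ++ u :: v :: S') ∨
      (∃ X' Y', X = X' ++ [u] ∧ Y = v :: Y') := by
  induction X generalizing P with
  | nil => exact Or.inr (Or.inl ⟨P, S, by simpa using h⟩)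
  | cons a X ih =>
    cases P with
    | nil =>
      simp only [nil_append, cons_append, List.cons.injEq] at h
      obtain ⟨rfl, h⟩ := h
      cases X with
      | nil =>
        simp only [nil_append] at h
        exact Or.inr (Or.inr ⟨[], S, by simp, by rw [h]⟩)
      | cons a' X =>
        simp only [cons_append, List.cons.injEq] at h
        obtain ⟨rfl, _⟩ := h
        exact Or.inl ⟨[], X, by simp⟩
    | cons p P =>
      simp only [cons_append, List.cons.injEq] at h
      obtain ⟨rfl, h⟩ := h
      rcases ih h with ⟨P', S', rfl⟩ | h2 | ⟨X', Y', rfl, hY⟩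
      · exact Or.inl ⟨a :: P', S', rfl⟩
      · exact Or.inr (Or.inl h2)
      · exact Or.inr (Or.inr ⟨a :: X', Y', rfl, hY⟩)

theorem mk_eq_mk_of_reduced {A B : List (α × Bool)} (hA : NoInv A) (hB : NoInv B)
    (h : FreeGroup.mk A = FreeGroup.mk B) : A = B := by
  have h1 : (FreeGroup.mk A).toWord = (FreeGroup.mk B).toWord := by rw [h]
  rwa [FreeGroup.toWord_mk, FreeGroup.toWord_mk, reduced_of_noInv hA, reduced_of_noInv hB] at h1

theorem eq_invRev_of_mul_eq_one {A B : List (α × Bool)} (hA : NoInv A) (hB : NoInv B)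
    (h : FreeGroup.mk A * FreeGroup.mk B = 1) : A = FreeGroup.invRev B := by
  have h2 : FreeGroup.mk A = FreeGroup.mk (FreeGroup.invRev B) := by
    rw [← FreeGroup.inv_mk]
    exact eq_inv_of_mul_eq_one_left h
  refine mk_eq_mk_of_reduced hA ?_ h2
  apply noInv_of_reduced
  rw [FreeGroup.reduce_invRev, reduced_of_noInv hB]

/-- The fundamental cancellation lemma: concatenating two reduced words,
the reduction is obtained by cancelling a block of length `t` on each side. -/
theorem cancel : ∀ (n : ℕ) (A B : List (α × Bool)), A.length ≤ n → NoInv A → NoInv B →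
    ∃ t, t ≤ A.length ∧ t ≤ B.length ∧
      FreeGroup.reduce (A ++ B) = A.take (A.length - t) ++ B.drop t := by
  intro n
  induction n with
  | zero =>
    intro A B hlen hA hB
    have : A = [] := List.eq_nil_of_length_eq_zero (Nat.le_zero.mp hlen)
    subst this
    exact ⟨0, by simp, by simp, by simpa using reduced_of_noInv hB⟩
  | succ n ih =>
    intro A B hlen hA hB
    by_cases hAB : NoInv (A ++ B)
    · exact ⟨0, by simp, by simp, by simpa using reduced_of_noInv hAB⟩
    · -- find the pattern
      simp only [NoInv, not_forall, not_not] at hAB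
      obtain ⟨P, S, x, b, hP⟩ := hAB
      rcases append_eq_pattern_split hP with ⟨P', S', hin⟩ | ⟨P', S', hin⟩ | ⟨X', Y', hX, hY⟩
      · exact absurd hin (hA P' S' x b)
      · exact absurd hin (hB P' S' x b)
      · -- A = X' ++ [(x,b)], B = (x,!b) :: Y'
        have hX'len : X'.length ≤ n := by
          have := congrArg List.length hX
          simp at this; omega
        have hX' : NoInv X' := noInv_infix ⟨[], [(x, b)], by simpa using hX.symm⟩ hA
        have hY' : NoInv Y' := noInv_infix ⟨[(x, !b)], [], by simpa using hY.symm⟩ hB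
        obtain ⟨t, ht1, ht2, heq⟩ := ih X' Y' hX'len hX' hY'
        have hstep : FreeGroup.Red.Step (A ++ B) (X' ++ Y') := by
          rw [hX, hY]
          have : X' ++ [(x, b)] ++ ((x, !b) :: Y') = X' ++ (x, b) :: (x, !b) :: Y' := by simp
          rw [this]
          exact FreeGroup.Red.Step.not
        have hred : FreeGroup.reduce (A ++ B) = FreeGroup.reduce (X' ++ Y') :=
          FreeGroup.reduce.Step.eq hstep
        refine ⟨t + 1, ?_, ?_, ?_⟩
        · rw [hX]; simp; omega
        · rw [hY]; simp; omega
        · rw [hred, heq, hX, hY]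
          have h1 : (X' ++ [(x, b)]).length - (t + 1) = X'.length - t := by simp
          rw [h1, List.take_append_of_le_length (by omega), List.drop_succ_cons]

theorem norm_def (x : FreeGroup α) : FreeGroup.norm x = x.toWord.length := rfl

theorem norm_mk_reduced {L : List (α × Bool)} (h : NoInv L) :
    FreeGroup.norm (FreeGroup.mk L) = L.length := by
  rw [norm_def, FreeGroup.toWord_mk, reduced_of_noInv h]

theorem toWord_mul (a b : FreeGroup α) :
    (a * b).toWord = FreeGroup.reduce (a.toWord ++ b.toWord) := by
  conv_lhs => rw [← FreeGroup.mk_toWord (x := a), ← FreeGroup.mk_toWord (x := b)]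
  rw [FreeGroup.mul_mk, FreeGroup.toWord_mk]

theorem invRev_take (L : List (α × Bool)) (t : ℕ) :
    (FreeGroup.invRev L).take t = FreeGroup.invRev (L.drop (L.length - t)) := by
  unfold FreeGroup.invRev
  rw [List.take_reverse, List.map_drop, List.length_map]

/-- from the cancellation equation, the cancelled parts are mutually inverse -/
theorem cancel_parts {A B : List (α × Bool)} {t : ℕ}
    (h : FreeGroup.reduce (A ++ B) = A.take (A.length - t) ++ B.drop t) :
    FreeGroup.mk (A.drop (A.length - t)) * FreeGroup.mk (B.take t) = 1 := by
  have h0 : FreeGroup.mk A * FreeGroup.mk B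
      = FreeGroup.mk (A.take (A.length - t)) * FreeGroup.mk (B.drop t) := by
    rw [FreeGroup.mul_mk, FreeGroup.mul_mk, ← h, FreeGroup.reduce.self]
  have hA : FreeGroup.mk A
      = FreeGroup.mk (A.take (A.length - t)) * FreeGroup.mk (A.drop (A.length - t)) := by
    rw [FreeGroup.mul_mk, List.take_append_drop]
  have hB : FreeGroup.mk B = FreeGroup.mk (B.take t) * FreeGroup.mk (B.drop t) := by
    rw [FreeGroup.mul_mk, List.take_append_drop]
  rw [hA, hB] at h0
  have key : FreeGroup.mk (A.drop (A.length - t)) * FreeGroup.mk (B.take t)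
      = (FreeGroup.mk (A.take (A.length - t)))⁻¹ *
        ((FreeGroup.mk (A.take (A.length - t)) * FreeGroup.mk (A.drop (A.length - t))) *
          (FreeGroup.mk (B.take t) * FreeGroup.mk (B.drop t))) *
        (FreeGroup.mk (B.drop t))⁻¹ := by group
  rw [key, h0]
  group

/-- prefix of a product is a prefix of the first factor or close to it -/
theorem prefix_step {a b u : FreeGroup α} (hu : u.toWord <+: (a * b).toWord) :
    u.toWord <+: a.toWord ∨ FreeGroup.norm (a⁻¹ * u) ≤ FreeGroup.norm b := by
  obtain ⟨t, ht1, ht2, heq⟩ := cancel a.toWord.length a.toWord b.toWord le_rfl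
    (noInv_toWord a) (noInv_toWord b)
  rw [toWord_mul, heq] at hu
  set A := a.toWord with hA
  set B := b.toWord with hB
  set X := A.take (A.length - t) with hX
  by_cases hlen : u.toWord.length ≤ X.length
  · left
    exact (List.prefix_of_prefix_length_le hu (X.prefix_append _) hlen).trans
      (List.take_prefix _ _)
  · right
    have hXu : X <+: u.toWord :=
      List.prefix_of_prefix_length_le (X.prefix_append _) hu (by omega)
    obtain ⟨V, hV⟩ := hXu
    have hVY : V <+: B.drop t := by
      obtain ⟨W, hW⟩ := hu
      rw [← hV, List.append_assoc] at hW
      exact ⟨W, List.append_cancel_left hW⟩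
    have hu2 : u = FreeGroup.mk X * FreeGroup.mk V := by
      rw [FreeGroup.mul_mk, hV, FreeGroup.mk_toWord]
    have ha2 : a = FreeGroup.mk X * FreeGroup.mk (A.drop (A.length - t)) := by
      rw [FreeGroup.mul_mk, List.take_append_drop, FreeGroup.mk_toWord]
    have : a⁻¹ * u = (FreeGroup.mk (A.drop (A.length - t)))⁻¹ * FreeGroup.mk V := by
      rw [hu2, ha2]; group
    rw [this]
    calc FreeGroup.norm _ ≤ _ + _ := FreeGroup.norm_mul_le _ _
      _ ≤ (A.drop (A.length - t)).length + V.length := by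
          rw [FreeGroup.norm_inv_eq]
          exact Nat.add_le_add (FreeGroup.norm_mk_le) (FreeGroup.norm_mk_le)
      _ ≤ t + (B.length - t) := by
          have h1 : (A.drop (A.length - t)).length = t := by simp; omega
          have h2 : V.length ≤ (B.drop t).length := hVY.length_le
          simp at h2
          omega
      _ ≤ B.length := by omega
      _ = FreeGroup.norm b := (norm_def b).symm


variable {N : Subgroup (FreeGroup α)}

/-- quasiconvexity: a prefix of (the reduced word of) a product of short elements of `N`
is at distance at most `L` from `N`. -/
theorem quasiconvex (L : ℕ) (l : List (FreeGroup α)) (hl : ∀ x ∈ l, x ∈ N ∧ FreeGroup.norm x ≤ L)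
    (u : FreeGroup α) (hu : u.toWord <+: l.prod.toWord) :
    ∃ p ∈ N, FreeGroup.norm (p⁻¹ * u) ≤ L := by
  induction l using List.reverseRecOn generalizing u with
  | nil =>
    refine ⟨1, N.one_mem, ?_⟩
    have : u.toWord = [] := List.prefix_nil.mp (by simpa using hu)
    rw [FreeGroup.toWord_eq_nil_iff.mp this]
    simp
  | append_singleton l s ih =>
    rw [List.prod_append, List.prod_singleton] at hu
    rcases prefix_step hu with h1 | h2
    · exact ih (fun x hx => hl x (List.mem_append_left _ hx)) u h1
    · refine ⟨l.prod, Subgroup.list_prod_mem _ (fun x hx => (hl x (List.mem_append_left _ hx)).1), ?_⟩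
      exact h2.trans (hl s (by simp)).2

theorem exists_cyclically_reduced (hN : N.Normal) :
    ∀ (k : ℕ) (w : FreeGroup α), w ∈ N → w ≠ 1 → FreeGroup.norm w ≤ k →
    ∃ w₀ ∈ N, w₀ ≠ 1 ∧ NoInv (w₀.toWord ++ w₀.toWord) := by
  intro k
  induction k with
  | zero =>
    intro w hw hw1 hwn
    exact absurd (FreeGroup.norm_eq_zero.mp (Nat.le_zero.mp hwn)) hw1
  | succ k ih =>
    intro w hw hw1 hwn
    by_cases hcyc : NoInv (w.toWord ++ w.toWord)
    · exact ⟨w, hw, hw1, hcyc⟩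
    · simp only [NoInv, not_forall, not_not] at hcyc
      obtain ⟨P, S, x, b, hP⟩ := hcyc
      rcases append_eq_pattern_split hP with ⟨P', S', hin⟩ | ⟨P', S', hin⟩ | ⟨X', Y', hX, hY⟩
      · exact absurd hin (noInv_toWord w P' S' x b)
      · exact absurd hin (noInv_toWord w P' S' x b)
      · -- w.toWord ends with (x,b) and starts with (x,!b)
        cases X' with
        | nil =>
          exfalso
          rw [hX] at hY
          simp at hY
        | cons a X'' =>
          have ha : a = (x, !b) := by
            have := hX ▸ hY
            simpa using (List.cons.injEq .. ▸ this).1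
          have hY' : Y' = X'' ++ [(x, b)] := by
            rw [hX] at hY
            rw [ha] at hY
            simpa using hY.symm
          set v : FreeGroup α := FreeGroup.mk [(x, !b)] with hv
          have hwform : w = v * FreeGroup.mk Y' := by
            rw [hv, FreeGroup.mul_mk, List.singleton_append, ← hY, FreeGroup.mk_toWord]
          set w' : FreeGroup α := v⁻¹ * w * v with hw'
          have hw'N : w' ∈ N := by
            have := hN.conj_mem w hw v⁻¹
            simpa [hw', inv_inv, mul_assoc] using this
          have hw'1 : w' ≠ 1 := by
            intro hcon
            apply hw1
            have hwv : w = v * w' * v⁻¹ := by rw [hw']; group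
            rw [hcon] at hwv
            simpa using hwv
          have hw'eq : w' = FreeGroup.mk X'' := by
            have h1 : w' = FreeGroup.mk Y' * v := by
              rw [hw', hwform]; group
            rw [h1, hv, FreeGroup.mul_mk, hY']
            have : (X'' ++ [(x, b)]) ++ [(x, !b)] = X'' ++ (x, b) :: (x, !b) :: [] := by simp
            rw [this]
            have hstep : FreeGroup.Red.Step (X'' ++ (x, b) :: (x, !b) :: []) (X'' ++ []) :=
              FreeGroup.Red.Step.not
            rw [← FreeGroup.quot_mk_eq_mk, ← FreeGroup.quot_mk_eq_mk, Quot.sound hstep]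
            simp
          have hlen : FreeGroup.norm w' ≤ k := by
            rw [hw'eq]
            have h2 : X''.length + 2 ≤ k + 1 := by
              have hlenW : w.toWord.length = X''.length + 2 := by rw [hX]; simp
              have hw2 : w.toWord.length ≤ k + 1 := by rw [← norm_def]; exact hwn
              omega
            exact le_trans FreeGroup.norm_mk_le (by omega)
          exact ih w' hw'N hw'1 hlen


theorem exists_far [Finite α] (hnf : ¬ N.FiniteIndex) (R : ℕ) :
    ∃ g : FreeGroup α, ∀ n ∈ N, R < FreeGroup.norm (g * n) := by
  by_contra hcon
  push_neg at hcon
  apply hnf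
  have hfin : {x : FreeGroup α | FreeGroup.norm x ≤ R}.Finite := by
    apply Set.Finite.of_finite_image (f := FreeGroup.toWord)
    · apply Set.Finite.subset (List.finite_length_le (α × Bool) R)
      rintro l ⟨x, hx, rfl⟩
      exact hx
    · exact fun x _ y _ hxy => FreeGroup.toWord_injective hxy
  haveI : Finite {x : FreeGroup α // FreeGroup.norm x ≤ R} := hfin.to_subtype
  haveI : Finite (FreeGroup α ⧸ N) := by
    apply Finite.of_surjective
      (fun x : {x : FreeGroup α // FreeGroup.norm x ≤ R} => (QuotientGroup.mk x.val : FreeGroup α ⧸ N))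
    intro q
    induction q using QuotientGroup.induction_on with
    | H g =>
      obtain ⟨n, hn, hle⟩ := hcon g
      exact ⟨⟨g * n, hle⟩, QuotientGroup.mk_mul_of_mem g hn⟩
  exact @Subgroup.finiteIndex_of_finite_quotient _ _ N _

theorem exists_min_rep (g : FreeGroup α) (N : Subgroup (FreeGroup α)) :
    ∃ n₀ ∈ N, ∀ n ∈ N, FreeGroup.norm (g * n₀) ≤ FreeGroup.norm ((g * n₀) * n) := by
  set s : Set ℕ := (fun n : FreeGroup α => FreeGroup.norm (g * n)) '' N with hs
  have hne : s.Nonempty := ⟨FreeGroup.norm (g * 1), 1, N.one_mem, rfl⟩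
  obtain ⟨n₀, hn₀, hmin⟩ := Nat.sInf_mem hne
  refine ⟨n₀, hn₀, fun n hn => ?_⟩
  have hmin' : FreeGroup.norm (g * n₀) = sInf s := hmin
  rw [mul_assoc, hmin']
  exact Nat.sInf_le ⟨n₀ * n, N.mul_mem hn₀ hn, rfl⟩


theorem main [Finite α] (N : Subgroup (FreeGroup α)) (hN : N.Normal) (hfg : N.FG)
    (hne : N ≠ ⊥) : N.FiniteIndex := by
  by_contra hnf
  obtain ⟨S, hS⟩ := hfg
  set L : ℕ := S.sup FreeGroup.norm with hL
  -- a nontrivial element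
  obtain ⟨a, ha1⟩ := Subgroup.ne_bot_iff_exists_ne_one.mp hne
  have hw : (a : FreeGroup α) ∈ N := a.2
  have hw1 : (a : FreeGroup α) ≠ 1 := by simpa using ha1
  -- a cyclically reduced nontrivial element of N
  obtain ⟨w₀, hw₀N, hw₀1, hcyc⟩ :=
    exists_cyclically_reduced hN (FreeGroup.norm (a : FreeGroup α)) (a : FreeGroup α) hw hw1 le_rfl
  set W : List (α × Bool) := w₀.toWord with hWdef
  set m : ℕ := W.length with hm
  have hm1 : 1 ≤ m := by
    rcases Nat.eq_zero_or_pos m with h0 | h1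
    · exact absurd (FreeGroup.toWord_eq_nil_iff.mp (List.eq_nil_of_length_eq_zero h0)) hw₀1
    · exact h1
  -- a coset far away from N, with minimal representative g'
  obtain ⟨g, hgfar⟩ := exists_far (N := N) hnf (L + m)
  obtain ⟨n₀, hn₀N, hmin0⟩ := exists_min_rep g N
  set g' : FreeGroup α := g * n₀ with hg'
  have hmin : ∀ n ∈ N, FreeGroup.norm g' ≤ FreeGroup.norm (g' * n) := hmin0
  have hfar : ∀ n ∈ N, L + m < FreeGroup.norm (g' * n) := by
    intro n hn
    rw [hg', mul_assoc]
    exact hgfar _ (N.mul_mem hn₀N hn)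
  have hfarg' : L + m < FreeGroup.norm g' := by
    simpa using hfar 1 N.one_mem
  set G : List (α × Bool) := g'.toWord with hGdef
  have hnormg' : FreeGroup.norm g' = G.length := rfl
  -- first cancellation : g' * w₀
  obtain ⟨c, hc1, hc2, hceq⟩ := cancel G.length G W le_rfl (noInv_toWord g') (noInv_toWord w₀)
  have hgw : FreeGroup.norm (g' * w₀) = (G.length - c) + (m - c) := by
    rw [norm_def, toWord_mul, ← hGdef, ← hWdef, hceq]
    simp only [List.length_append, List.length_take, List.length_drop]
    omega
  have h2c : 2 * c ≤ m := by
    have := hmin w₀ hw₀N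
    rw [hgw, hnormg'] at this
    omega
  have hcm : c < m := by omega
  -- the cancelled pieces
  set e : FreeGroup α := FreeGroup.mk (W.take c) with he
  set d : FreeGroup α := FreeGroup.mk (G.drop (G.length - c)) with hd
  have hde : d * e = 1 := cancel_parts hceq
  have hdinv : d = e⁻¹ := eq_inv_of_mul_eq_one_left hde
  -- the rotated element w₁
  set W₁ : List (α × Bool) := W.drop c ++ W.take c with hW₁
  set w₁ : FreeGroup α := FreeGroup.mk W₁ with hw₁def
  have hw₀split : w₀ = e * FreeGroup.mk (W.drop c) := by
    rw [he, FreeGroup.mul_mk, List.take_append_drop, hWdef, FreeGroup.mk_toWord]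
  have hw₁conj : w₁ = e⁻¹ * w₀ * e := by
    rw [hw₁def, hW₁, ← FreeGroup.mul_mk, ← he, hw₀split]
    group
  have hw₁N : w₁ ∈ N := by
    rw [hw₁conj]
    have := hN.conj_mem w₀ hw₀N e⁻¹
    simpa [inv_inv, mul_assoc] using this
  have hW₁len : W₁.length = m := by
    rw [hW₁]
    simp only [List.length_append, List.length_take, List.length_drop]
    omega
  have hW₁noInv : NoInv W₁ := by
    have hWW : (W ++ W).drop c = W.drop c ++ W := by
      rw [List.drop_append, Nat.sub_eq_zero_of_le hc2, List.drop_zero]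
    have hWW2 : ((W ++ W).drop c).take m = W₁ := by
      rw [hWW, List.take_append,
        List.take_of_length_le (by simp only [List.length_drop]; omega)]
      congr 2
      simp only [List.length_drop]
      omega
    rw [← hWW2]
    exact noInv_infix (((List.take_prefix _ _).isInfix).trans ((List.drop_suffix _ _).isInfix)) hcyc
  have htoW₁ : w₁.toWord = W₁ := by
    rw [hw₁def, FreeGroup.toWord_mk, reduced_of_noInv hW₁noInv]
  -- the prefix g₁ of g'
  set G₁ : List (α × Bool) := G.take (G.length - c) with hG₁
  set g₁ : FreeGroup α := FreeGroup.mk G₁ with hg₁def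
  have hG₁noInv : NoInv G₁ := noInv_infix (List.take_prefix _ _).isInfix (noInv_toWord g')
  have htoG₁ : g₁.toWord = G₁ := by rw [hg₁def, FreeGroup.toWord_mk, reduced_of_noInv hG₁noInv]
  have hG₁len : G₁.length = G.length - c := by
    rw [hG₁]
    simp only [List.length_take]
    omega
  have hg'split : g' = g₁ * d := by
    rw [hg₁def, hd, FreeGroup.mul_mk, List.take_append_drop, hGdef, FreeGroup.mk_toWord]
  -- L₁ = G₁ ++ W₁ is reduced
  have hZred : NoInv (G₁ ++ W.drop c) := by
    apply noInv_of_reduced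
    rw [← hceq]
    exact FreeGroup.reduce.idem
  have hL₁noInv : NoInv (G₁ ++ W₁) := by
    intro P Q x b hPQ
    rw [hW₁, ← List.append_assoc] at hPQ
    rcases append_eq_pattern_split hPQ with ⟨P', S', hin⟩ | ⟨P', S', hin⟩ | ⟨X', Y', hX, hY⟩
    · exact hZred P' S' x b hin
    · exact noInv_infix (List.take_prefix c W).isInfix (noInv_toWord w₀) P' S' x b hin
    · -- the straddle case: W ends with (x,b) and starts with (x,!b)
      have hsuf : [(x, b)] <:+ W := by
        have h1 : [(x, b)] <:+ G₁ ++ W.drop c := ⟨X', hX.symm⟩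
        have h2 : W.drop c <:+ G₁ ++ W.drop c := ⟨G₁, rfl⟩
        have h3 : [(x, b)] <:+ W.drop c :=
          List.suffix_of_suffix_length_le h1 h2 (by simp; omega)
        exact h3.trans (List.drop_suffix _ _)
      have hpre : [(x, !b)] <+: W := by
        have h1 : [(x, !b)] <+: W.take c := ⟨Y', by rw [hY]; rfl⟩

        exact h1.trans (List.take_prefix _ _)
      obtain ⟨T', hT'⟩ := hsuf
      obtain ⟨T, hT⟩ := hpre
      have h5 : W ++ W = (T' ++ [(x, b)]) ++ ([(x, !b)] ++ T) := by rw [hT', hT]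
      exact hcyc T' T x b (h5.trans (by simp))
  -- second cancellation : (g₁ * w₁) * g₁⁻¹
  have hinvG₁noInv : NoInv (FreeGroup.invRev G₁) := by
    apply noInv_of_reduced
    rw [FreeGroup.reduce_invRev, reduced_of_noInv hG₁noInv]
  obtain ⟨t, ht1, ht2, hteq⟩ := cancel (G₁ ++ W₁).length (G₁ ++ W₁) (FreeGroup.invRev G₁)
    le_rfl hL₁noInv hinvG₁noInv
  have hinvlen : (FreeGroup.invRev G₁).length = G₁.length := FreeGroup.invRev_length
  set n : FreeGroup α := g₁ * w₁ * g₁⁻¹ with hn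
  have hnN : n ∈ N := by
    have := hN.conj_mem w₁ hw₁N g₁
    simpa [hn] using this
  have hton : n.toWord = FreeGroup.reduce ((G₁ ++ W₁) ++ FreeGroup.invRev G₁) := by
    have h6 : n = FreeGroup.mk ((G₁ ++ W₁) ++ FreeGroup.invRev G₁) := by
      rw [hn, hg₁def, hw₁def, FreeGroup.mul_mk, FreeGroup.inv_mk, FreeGroup.mul_mk]
    rw [h6, FreeGroup.toWord_mk]
  have hlenL₁ : (G₁ ++ W₁).length = G₁.length + m := by simp [hW₁len]
  -- t < m
  have htm : t < m := by
    by_contra hge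
    push_neg at hge
    have hparts := cancel_parts hteq
    have hkey : (G₁ ++ W₁).drop ((G₁ ++ W₁).length - t) = G₁.drop (G₁.length - t) := by
      have h1 := eq_invRev_of_mul_eq_one
        (noInv_infix (List.drop_suffix _ _).isInfix hL₁noInv)
        (noInv_infix (List.take_prefix _ _).isInfix hinvG₁noInv) hparts
      rw [invRev_take, FreeGroup.invRev_invRev] at h1
      exact h1
    rw [hlenL₁] at hkey
    have hdropsplit : (G₁ ++ W₁).drop (G₁.length + m - t)
        = G₁.drop (G₁.length + m - t) ++ W₁ := by
      rw [List.drop_append]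
      have h0 : G₁.length + m - t - G₁.length = 0 := by omega
      rw [h0, List.drop_zero]
    rw [hdropsplit] at hkey
    have ht2' : t ≤ G₁.length := by rw [← hinvlen]; exact ht2
    -- g₁ = q * w₁
    set q : FreeGroup α :=
      FreeGroup.mk (G₁.take (G₁.length - t)) * FreeGroup.mk (G₁.drop (G₁.length + m - t)) with hq
    have hg₁q : g₁ = q * w₁ := by
      have h2 : g₁ = FreeGroup.mk (G₁.take (G₁.length - t))
          * FreeGroup.mk (G₁.drop (G₁.length - t)) := by
        rw [FreeGroup.mul_mk, List.take_append_drop, hg₁def]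
      rw [h2, ← hkey, ← FreeGroup.mul_mk, hq, hw₁def]
      group
    have hnormq : FreeGroup.norm q ≤ (G₁.length - t) + (t - m) := by
      rw [hq]
      calc FreeGroup.norm _ ≤ _ + _ := FreeGroup.norm_mul_le _ _
        _ ≤ (G₁.take (G₁.length - t)).length + (G₁.drop (G₁.length + m - t)).length :=
            Nat.add_le_add FreeGroup.norm_mk_le FreeGroup.norm_mk_le
        _ ≤ (G₁.length - t) + (t - m) := by
            simp only [List.length_take, List.length_drop]
            omega
    have hnormd : FreeGroup.norm d ≤ c := by
      rw [hd]
      calc FreeGroup.norm _ ≤ (G.drop (G.length - c)).length := FreeGroup.norm_mk_le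
        _ ≤ c := by simp only [List.length_drop]; omega
    have hconj : g'⁻¹ * (q * d) = d⁻¹ * w₁⁻¹ * d := by
      rw [hg'split, hg₁q]; group
    have hmem : g'⁻¹ * (q * d) ∈ N := by
      rw [hconj]
      have := hN.conj_mem w₁⁻¹ (N.inv_mem hw₁N) d⁻¹
      simpa [inv_inv, mul_assoc] using this
    have hle := hmin _ hmem
    rw [show g' * (g'⁻¹ * (q * d)) = q * d by group] at hle
    have hqd : FreeGroup.norm (q * d) ≤ (G₁.length - t) + (t - m) + c :=
      le_trans (FreeGroup.norm_mul_le _ _) (by omega)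
    rw [hnormg'] at hle
    rw [hG₁len] at hqd ht2'
    omega
  -- g₁'s word is a prefix of n's word
  have hpre : g₁.toWord <+: n.toWord := by
    rw [htoG₁, hton, hteq]
    have hG₁take : (G₁ ++ W₁).take G₁.length = G₁ := List.take_left
    have h7 : G₁.length ≤ (G₁ ++ W₁).length - t := by
      rw [hlenL₁]
      omega
    have h9 : G₁ <+: (G₁ ++ W₁).take ((G₁ ++ W₁).length - t) := by
      have h10 := List.take_prefix_take_left (l := G₁ ++ W₁) h7
      rwa [hG₁take] at h10
    exact h9.trans (List.prefix_append _ _)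
  -- quasiconvexity
  have h1 : n ∈ Subgroup.closure (S : Set (FreeGroup α)) := by rw [hS]; exact hnN
  have h2 : n ∈ Submonoid.closure ((S : Set (FreeGroup α)) ∪ (S : Set (FreeGroup α))⁻¹) := by
    rw [← Subgroup.closure_toSubmonoid]
    exact h1
  obtain ⟨l, hlmem, hlprod⟩ := Submonoid.exists_list_of_mem_closure h2
  have hl : ∀ x ∈ l, x ∈ N ∧ FreeGroup.norm x ≤ L := by
    intro x hx
    rcases hlmem x hx with hx1 | hx2
    · exact ⟨hS ▸ Subgroup.subset_closure hx1, Finset.le_sup hx1⟩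
    · rw [Set.mem_inv] at hx2
      refine ⟨?_, ?_⟩
      · have : x⁻¹ ∈ N := hS ▸ Subgroup.subset_closure hx2
        simpa using N.inv_mem this
      · rw [← FreeGroup.norm_inv_eq]
        exact Finset.le_sup hx2
  obtain ⟨p, hpN, hpnorm⟩ := quasiconvex L l hl g₁ (by rw [hlprod]; exact hpre)
  -- final contradiction
  have hx : p⁻¹ * g' = (p⁻¹ * g₁) * d := by rw [hg'split]; group
  have hxnorm : FreeGroup.norm (p⁻¹ * g') ≤ L + m := by
    rw [hx]
    calc FreeGroup.norm _ ≤ _ + _ := FreeGroup.norm_mul_le _ _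
      _ ≤ L + c := by
          have hnormd : FreeGroup.norm d ≤ c := by
            rw [hd]
            calc FreeGroup.norm _ ≤ (G.drop (G.length - c)).length := FreeGroup.norm_mk_le
              _ ≤ c := by simp; omega
          omega
      _ ≤ L + m := by omega
  have hmem2 : g'⁻¹ * p⁻¹ * g' ∈ N := by
    have := hN.conj_mem p⁻¹ (N.inv_mem hpN) g'⁻¹
    simpa [inv_inv, mul_assoc] using this
  have hxfar := hfar _ hmem2
  rw [show g' * (g'⁻¹ * p⁻¹ * g') = p⁻¹ * g' by group] at hxfar
  omega

end FGNormal

/-- Every nontrivial finitely generated normal subgroup of a finitely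
generated nonabelian free group (free of rank `h > 1`) has finite index. -/
theorem fg_normal_subgroup_of_free_group_finiteIndex
    (h : ℕ) (hh : 1 < h) (N : Subgroup (FreeGroup (Fin h)))
    (hN : N.Normal) (hfg : N.FG) (hne : N ≠ ⊥) :
    N.FiniteIndex := by
  exact FGNormal.main N hN hfg hne
end

section
/- Let S: P → F be a surjective homomorphism onto a group F in which every nontrivial finitely generated normal subgroup has finite index, and let K ⊴ P be a finitely generated normal subgroup such that there exist homomorphisms x: F → ℚ and y: P/K → ℚ with y∘q = x∘S, where q: P → P/K is the quotient map, and with x∘S nonzero. Then S(K) does not have finite index in F, so S(K) = 1 and S factors through P/K. -/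
/-- If `S : P → F` is a surjective homomorphism onto a group `F` in which every
nontrivial finitely generated normal subgroup has finite index, `K ⊴ P` is a
finitely generated normal subgroup, and there are homomorphisms
`x : F → ℚ`, `y : P/K → ℚ` making the square commute with `x ∘ S` nonzero,
then `S(K) = 1` and `S` factors through `P/K`. -/
theorem surjection_factors_through_quotient
    {P F : Type*} [Group P] [Group F]
    (hF : ∀ N : Subgroup F, N.Normal → N.FG → N ≠ ⊥ → N.FiniteIndex)
    (S : P →* F) (hS : Function.Surjective S)
    (K : Subgroup P) [K.Normal] (hKfg : K.FG)
    (x : F →* Multiplicative ℚ) (y : (P ⧸ K) →* Multiplicative ℚ)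
    (hsq : x.comp S = y.comp (QuotientGroup.mk' K))
    (hnz : x.comp S ≠ 1) :
    K.map S = ⊥ ∧ ∃ T : (P ⧸ K) →* F, S = T.comp (QuotientGroup.mk' K) := by
  -- x kills S(K)
  have hxK : ∀ f ∈ K.map S, x f = 1 := by
    rintro f ⟨k, hk, rfl⟩
    have := DFunLike.congr_fun hsq k
    simp only [MonoidHom.comp_apply, QuotientGroup.mk'_apply] at this
    rw [this, show ((k : P ⧸ K)) = 1 from (QuotientGroup.eq_one_iff k).mpr hk, map_one]
  have hnorm : (K.map S).Normal := Subgroup.Normal.map ‹K.Normal› S hS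
  have hbot : K.map S = ⊥ := by
    by_contra hne
    have hfi : (K.map S).FiniteIndex := hF _ hnorm (by
      obtain ⟨T, hT⟩ := hKfg
      classical
      exact ⟨T.image S, by rw [Finset.coe_image, ← MonoidHom.map_closure, hT]⟩) hne
    -- then x = 1
    have hx1 : x = 1 := by
      ext f
      have hpow : f ^ (K.map S).index ∈ K.map S := Subgroup.pow_index_mem _ f
      have : (x f) ^ (K.map S).index = 1 := by rw [← map_pow]; exact hxK _ hpow
      have hq : ((K.map S).index : ℚ) • Multiplicative.toAdd (x f) = 0 := by
        have := congrArg Multiplicative.toAdd this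
        simpa [toAdd_pow] using this
      have hne0 : ((K.map S).index : ℚ) ≠ 0 := by
        exact_mod_cast hfi.index_ne_zero
      have := (smul_eq_zero.mp hq).resolve_left hne0
      show x f = 1
      exact Multiplicative.toAdd.injective (by simpa using this)
    exact hnz (by rw [hx1, MonoidHom.one_comp])
  refine ⟨hbot, ?_⟩
  have hker : K ≤ S.ker := by
    intro k hk
    have : S k ∈ K.map S := ⟨k, hk, rfl⟩
    rw [hbot] at this
    exact this
  refine ⟨QuotientGroup.lift K S hker, ?_⟩
  ext p
  rfl
end

section
/- Let H = H₁(S_g;ℤ) with symplectic form, let {a₁,...,a_g,b₁,...,b_g} be a symplectic basis, and ω = Σ aⱼ∧bⱼ. Suppose φ: π₁(S_g) → F_h (h > 1) is a surjective homomorphism with b₁ ∈ Ker(φ) and φ(a₁), φ(a₂) part of a free generating set of F_h. If e is an automorphism of π₁(S_g) acting trivially on H with Johnson image τ(e)(b₁) = a₁∧a₂ ∈ ∧²H/ℤω, then e(Ker(φ)) ≠ Ker(φ). -/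
open scoped commutatorElement



@[ext] structure Heis where
  x : ℤ
  y : ℤ
  z : ℤ

namespace Heis

instance : Mul Heis := ⟨fun a b => ⟨a.x + b.x, a.y + b.y, a.z + b.z + a.x * b.y⟩⟩
instance : One Heis := ⟨⟨0, 0, 0⟩⟩
instance : Inv Heis := ⟨fun a => ⟨-a.x, -a.y, -a.z + a.x * a.y⟩⟩

@[simp] lemma mul_x (a b : Heis) : (a * b).x = a.x + b.x := rfl
@[simp] lemma mul_y (a b : Heis) : (a * b).y = a.y + b.y := rfl
@[simp] lemma mul_z (a b : Heis) : (a * b).z = a.z + b.z + a.x * b.y := rfl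
@[simp] lemma one_x : (1 : Heis).x = 0 := rfl
@[simp] lemma one_y : (1 : Heis).y = 0 := rfl
@[simp] lemma one_z : (1 : Heis).z = 0 := rfl
@[simp] lemma inv_x (a : Heis) : a⁻¹.x = -a.x := rfl
@[simp] lemma inv_y (a : Heis) : a⁻¹.y = -a.y := rfl
@[simp] lemma inv_z (a : Heis) : a⁻¹.z = -a.z + a.x * a.y := rfl

instance : Group Heis where
  mul_assoc a b c := by ext <;> simp <;> ring
  one_mul a := by ext <;> simp
  mul_one a := by ext <;> simp
  inv_mul_cancel a := by ext <;> simp <;> ring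

lemma central_of (a : Heis) (hx : a.x = 0) (hy : a.y = 0) : a ∈ Subgroup.center Heis := by
  rw [Subgroup.mem_center_iff]
  intro b
  ext <;> simp [hx, hy] <;> ring

lemma lcs_one_le_center : (⊤ : Subgroup Heis).lowerCentralSeries 1 ≤ Subgroup.center Heis := by
  show ⁅(⊤ : Subgroup Heis), ⊤⁆ ≤ _
  rw [Subgroup.commutator_le]
  intro p _ q _
  apply central_of <;> simp [commutatorElement_def] <;> ring

lemma lcs_two_eq_bot : (⊤ : Subgroup Heis).lowerCentralSeries 2 = ⊥ := by
  rw [eq_bot_iff]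
  show ⁅(⊤ : Subgroup Heis).lowerCentralSeries 1, ⊤⁆ ≤ ⊥
  rw [Subgroup.commutator_le]
  intro p hp q _
  have := (Subgroup.mem_center_iff.mp (lcs_one_le_center hp)) q
  simp only [commutatorElement_def, Subgroup.mem_bot, ← this]
  group

end Heis

lemma lcs_map_le {G K : Type*} [Group G] [Group K] (f : G →* K) (n : ℕ) :
    ((⊤ : Subgroup G).lowerCentralSeries n).map f ≤ (⊤ : Subgroup K).lowerCentralSeries n := by
  rw [Subgroup.map_lowerCentralSeries]
  induction n with
  | zero => exact le_top
  | succ d hd =>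
    rw [Subgroup.lowerCentralSeries_succ, Subgroup.lowerCentralSeries_succ]
    exact Subgroup.commutator_mono hd le_top

/-- In a free group, the commutator of two distinct generators is not in the
second term of the lower central series. -/
lemma commutator_of_not_mem_lcs_two {h : ℕ} (i₁ i₂ : Fin h) (hij : i₁ ≠ i₂) :
    ⁅(FreeGroup.of i₁ : FreeGroup (Fin h)), FreeGroup.of i₂⁆ ∉
      (⊤ : Subgroup (FreeGroup (Fin h))).lowerCentralSeries 2 := by
  intro hmem
  set ψ : FreeGroup (Fin h) →* Heis :=
    FreeGroup.lift (fun j => if j = i₁ then (⟨1,0,0⟩ : Heis) else if j = i₂ then ⟨0,1,0⟩ else 1)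
  have h1 : ψ ⁅(FreeGroup.of i₁ : FreeGroup (Fin h)), FreeGroup.of i₂⁆ ∈
      (⊤ : Subgroup Heis).lowerCentralSeries 2 :=
    lcs_map_le ψ 2 ⟨_, hmem, rfl⟩
  rw [Heis.lcs_two_eq_bot, Subgroup.mem_bot] at h1
  have hψ1 : ψ (FreeGroup.of i₁) = ⟨1,0,0⟩ := by simp [ψ]
  have hψ2 : ψ (FreeGroup.of i₂) = ⟨0,1,0⟩ := by simp [ψ, hij.symm]
  rw [commutatorElement_def] at h1
  simp only [map_mul, map_inv, hψ1, hψ2] at h1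
  have := congrArg Heis.z h1
  simp at this

/-- The standard surface relator `∏ i ⁅aᵢ, bᵢ⁆` in the free group on
generators `a₁,…,a_g, b₁,…,b_g`. -/
def surfaceRel (g : ℕ) : FreeGroup (Fin g ⊕ Fin g) :=
  (List.ofFn fun i : Fin g =>
    ⁅(FreeGroup.of (Sum.inl i) : FreeGroup (Fin g ⊕ Fin g)), FreeGroup.of (Sum.inr i)⁆).prod

/-- The fundamental group of the closed orientable surface of genus `g`,
presented as `⟨a₁,…,a_g,b₁,…,b_g ∣ ∏ ⁅aᵢ,bᵢ⁆⟩`. -/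
abbrev SurfaceGroup (g : ℕ) : Type :=
  PresentedGroup ({surfaceRel g} : Set (FreeGroup (Fin g ⊕ Fin g)))

/-- Johnson homomorphism obstruction: let `g > 1`, let `a₁, a₂, b₁` be standard
generators of `π₁(S_g)`, and `φ : π₁(S_g) → F_h` (`h > 1`) a surjective
homomorphism with `b₁ ∈ ker φ` and `φ(a₁), φ(a₂)` two distinct free generators.
If `e` is an automorphism of `π₁(S_g)` acting trivially on homology (i.e.
`e(x)x⁻¹` lies in the commutator subgroup `π¹` for all `x`) whose Johnson image
satisfies `τ(e)(b₁) = a₁ ∧ a₂`, i.e. `e(b₁)b₁⁻¹ ≡ ⁅a₁,a₂⁆ mod π²`,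
then `e(ker φ) ≠ ker φ`. -/
theorem johnson_moves_kernel
    (g h : ℕ) (hg : 1 < g) (hh : 1 < h)
    (φ : SurfaceGroup g →* FreeGroup (Fin h)) (hφ : Function.Surjective φ)
    (i₁ i₂ : Fin h) (hij : i₁ ≠ i₂)
    (ha₁ : φ (PresentedGroup.of (Sum.inl ⟨0, by omega⟩)) = FreeGroup.of i₁)
    (ha₂ : φ (PresentedGroup.of (Sum.inl ⟨1, by omega⟩)) = FreeGroup.of i₂)
    (hb₁ : (PresentedGroup.of (Sum.inr ⟨0, by omega⟩) : SurfaceGroup g) ∈ φ.ker)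
    (e : SurfaceGroup g ≃* SurfaceGroup g)
    (hH : ∀ x : SurfaceGroup g, e x * x⁻¹ ∈ (⊤ : Subgroup (SurfaceGroup g)).lowerCentralSeries 1)
    (hτ : e (PresentedGroup.of (Sum.inr ⟨0, by omega⟩)) *
        (PresentedGroup.of (Sum.inr ⟨0, by omega⟩) : SurfaceGroup g)⁻¹ *
        ⁅(PresentedGroup.of (Sum.inl ⟨0, by omega⟩) : SurfaceGroup g),
          (PresentedGroup.of (Sum.inl ⟨1, by omega⟩) : SurfaceGroup g)⁆⁻¹
        ∈ (⊤ : Subgroup (SurfaceGroup g)).lowerCentralSeries 2) :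
    φ.ker.map e.toMonoidHom ≠ φ.ker := by
  intro hcontra
  set a₁ : SurfaceGroup g := PresentedGroup.of (Sum.inl ⟨0, by omega⟩)
  set a₂ : SurfaceGroup g := PresentedGroup.of (Sum.inl ⟨1, by omega⟩)
  set b₁ : SurfaceGroup g := PresentedGroup.of (Sum.inr ⟨0, by omega⟩)
  -- e b₁ ∈ ker φ
  have heb : e b₁ ∈ φ.ker := by
    rw [← hcontra]
    exact ⟨b₁, hb₁, rfl⟩
  -- w = e b₁ * b₁⁻¹ * ⁅a₁,a₂⁆⁻¹ ∈ lcs 2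
  set w : SurfaceGroup g := e b₁ * b₁⁻¹ * ⁅a₁, a₂⁆⁻¹
  have hw : w ∈ (⊤ : Subgroup (SurfaceGroup g)).lowerCentralSeries 2 := hτ
  have hkerb : φ b₁ = 1 := hb₁
  have hkereb : φ (e b₁) = 1 := heb
  -- φ w = ⁅of i₁, of i₂⁆⁻¹
  have hφw : φ w = ⁅(FreeGroup.of i₁ : FreeGroup (Fin h)), FreeGroup.of i₂⁆⁻¹ := by
    simp only [w, map_mul, map_inv, hkerb, hkereb, commutatorElement_def, ha₁, ha₂]
    group
  have hmem : ⁅(FreeGroup.of i₁ : FreeGroup (Fin h)), FreeGroup.of i₂⁆ ∈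
      (⊤ : Subgroup (FreeGroup (Fin h))).lowerCentralSeries 2 := by
    have : φ w ∈ (⊤ : Subgroup (FreeGroup (Fin h))).lowerCentralSeries 2 :=
      lcs_map_le φ 2 ⟨w, hw, rfl⟩
    rw [hφw] at this
    simpa using ((⊤ : Subgroup (FreeGroup (Fin h))).lowerCentralSeries 2).inv_mem this
  exact commutator_of_not_mem_lcs_two i₁ i₂ hij hmem
end

section
/- Let V be a 2g-dimensional ℚ-vector space (g > 1) with a nondegenerate alternating form, and consider W = V^⊕n with the 'configuration space cup product' structure: for x = (x¹,...,xⁿ), y = (y¹,...,yⁿ) ∈ W, the product xy vanishes if and only if for all i ≠ j, xⁱ⊗yʲ − yⁱ⊗xʲ is a scalar multiple of the canonical form element M_{i,j} = Σ_k aₖ⊗bₖ − bₖ⊗aₖ, and the symplectic pairings xⁱ·yⁱ satisfy the relations generated by R_{i,j}. Then: if x is a 'crossing element' (nonzero in at least two coordinates) and xy = 0 in the quotient, then x and y are proportional. -/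
open TensorProduct


private lemma tmul_functional {V : Type*} [AddCommGroup V] [Module ℚ V]
    (f : V →ₗ[ℚ] ℚ) {a b c d : V} (h : a ⊗ₜ[ℚ] b = c ⊗ₜ[ℚ] d) :
    f a • b = f c • d := by
  have := congrArg (fun t => (TensorProduct.lid ℚ V) ((LinearMap.rTensor V f) t)) h
  simpa using this

private lemma exists_functional {V : Type*} [AddCommGroup V] [Module ℚ V] {ι : Type*}
    (B : Module.Basis ι ℚ V) {v : V} (hv : v ≠ 0) : ∃ f : V →ₗ[ℚ] ℚ, f v = 1 := by
  have h0 : B.repr v ≠ 0 := by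
    intro h; exact hv (by simpa using (B.repr.map_eq_zero_iff).mp h)
  obtain ⟨p, hp⟩ : ∃ p, B.repr v p ≠ 0 := by
    by_contra h; push_neg at h
    exact h0 (Finsupp.ext fun p => h p)
  exact ⟨(B.repr v p)⁻¹ • B.coord p, by
    simp [Module.Basis.coord_apply, inv_mul_cancel₀ hp]⟩

private lemma entry_eq {V : Type*} [AddCommGroup V] [Module ℚ V] {g : ℕ}
    (B : Module.Basis (Fin g ⊕ Fin g) ℚ V) (a b c d : V) (r : ℚ)
    (h : a ⊗ₜ[ℚ] b - c ⊗ₜ[ℚ] d =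
        r • ∑ k : Fin g, (B (Sum.inl k) ⊗ₜ[ℚ] B (Sum.inr k)
          - B (Sum.inr k) ⊗ₜ[ℚ] B (Sum.inl k))) (p q : Fin g ⊕ Fin g) :
    B.repr a p * B.repr b q - B.repr c p * B.repr d q =
      r * ∑ k : Fin g,
        (((if Sum.inr k = q then (1:ℚ) else 0) * if Sum.inl k = p then 1 else 0) -
          (if Sum.inl k = q then (1:ℚ) else 0) * if Sum.inr k = p then 1 else 0) := by
  have := congrArg (fun t => ((B.tensorProduct B).repr t) (p, q)) h
  simp only [map_sub, map_smul, map_sum, Module.Basis.tensorProduct_repr_tmul_apply,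
    Module.Basis.repr_self, Finsupp.smul_apply, Finsupp.sub_apply, Finsupp.coe_finset_sum,
    Finset.sum_apply, Finsupp.single_apply, smul_eq_mul] at this
  rw [mul_comm ((B.repr b) q), mul_comm ((B.repr d) q)] at this
  exact this

private lemma coeff_zero {V : Type*} [AddCommGroup V] [Module ℚ V] {g : ℕ} (hg : 1 < g)
    (B : Module.Basis (Fin g ⊕ Fin g) ℚ V) (a b c d : V) (r : ℚ)
    (h : a ⊗ₜ[ℚ] b - c ⊗ₜ[ℚ] d =
        r • ∑ k : Fin g, (B (Sum.inl k) ⊗ₜ[ℚ] B (Sum.inr k)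
          - B (Sum.inr k) ⊗ₜ[ℚ] B (Sum.inl k))) : r = 0 := by
  set k0 : Fin g := ⟨0, by omega⟩
  set k1 : Fin g := ⟨1, by omega⟩
  have hk : k1 ≠ k0 := by simp [k0, k1, Fin.ext_iff]
  have e11 := entry_eq B a b c d r h (Sum.inl k0) (Sum.inr k0)
  have e12 := entry_eq B a b c d r h (Sum.inl k0) (Sum.inr k1)
  have e13 := entry_eq B a b c d r h (Sum.inl k0) (Sum.inl k0)
  have e21 := entry_eq B a b c d r h (Sum.inl k1) (Sum.inr k0)
  have e22 := entry_eq B a b c d r h (Sum.inl k1) (Sum.inr k1)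
  have e23 := entry_eq B a b c d r h (Sum.inl k1) (Sum.inl k0)
  have e31 := entry_eq B a b c d r h (Sum.inr k0) (Sum.inr k0)
  have e32 := entry_eq B a b c d r h (Sum.inr k0) (Sum.inr k1)
  have e33 := entry_eq B a b c d r h (Sum.inr k0) (Sum.inl k0)
  simp only [Finset.sum_sub_distrib, Sum.inl.injEq, Sum.inr.injEq,
    reduceCtorEq, if_false, if_true, mul_one, mul_zero, one_mul, zero_mul,
    sub_zero, zero_sub, Finset.sum_const_zero, mul_neg, ite_mul, Finset.sum_ite_eq',
    Finset.mem_univ, if_true, Finset.sum_neg_distrib, hk, if_neg hk,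
    if_neg (Ne.symm hk)] at e11 e12 e13 e21 e22 e23 e31 e32 e33
  have hdet : (B.repr a (Sum.inl k0) * B.repr b (Sum.inr k0) - B.repr c (Sum.inl k0) * B.repr d (Sum.inr k0)) * ((B.repr a (Sum.inl k1) * B.repr b (Sum.inr k1) - B.repr c (Sum.inl k1) * B.repr d (Sum.inr k1)) * (B.repr a (Sum.inr k0) * B.repr b (Sum.inl k0) - B.repr c (Sum.inr k0) * B.repr d (Sum.inl k0)) - (B.repr a (Sum.inl k1) * B.repr b (Sum.inl k0) - B.repr c (Sum.inl k1) * B.repr d (Sum.inl k0)) * (B.repr a (Sum.inr k0) * B.repr b (Sum.inr k1) - B.repr c (Sum.inr k0) * B.repr d (Sum.inr k1))) - (B.repr a (Sum.inl k0) * B.repr b (Sum.inr k1) - B.repr c (Sum.inl k0) * B.repr d (Sum.inr k1)) * ((B.repr a (Sum.inl k1) * B.repr b (Sum.inr k0) - B.repr c (Sum.inl k1) * B.repr d (Sum.inr k0)) * (B.repr a (Sum.inr k0) * B.repr b (Sum.inl k0) - B.repr c (Sum.inr k0) * B.repr d (Sum.inl k0)) - (B.repr a (Sum.inl k1) * B.repr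 b (Sum.inl k0) - B.repr c (Sum.inl k1) * B.repr d (Sum.inl k0)) * (B.repr a (Sum.inr k0) * B.repr b (Sum.inr k0) - B.repr c (Sum.inr k0) * B.repr d (Sum.inr k0))) + (B.repr a (Sum.inl k0) * B.repr b (Sum.inl k0) - B.repr c (Sum.inl k0) * B.repr d (Sum.inl k0)) * ((B.repr a (Sum.inl k1) * B.repr b (Sum.inr k0) - B.repr c (Sum.inl k1) * B.repr d (Sum.inr k0)) * (B.repr a (Sum.inr k0) * B.repr b (Sum.inr k1) - B.repr c (Sum.inr k0) * B.repr d (Sum.inr k1)) - (B.repr a (Sum.inl k1) * B.repr b (Sum.inr k1) - B.repr c (Sum.inl k1) * B.repr d (Sum.inr k1)) * (B.repr a (Sum.inr k0) * B.repr b (Sum.inr k0) - B.repr c (Sum.inr k0) * B.repr d (Sum.inr k0))) = 0 := by ring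
  rw [e11, e12, e13, e21, e22, e23, e31, e32, e33] at hdet
  have h3 : r ^ 3 = 0 := by linarith [hdet]
  exact pow_eq_zero_iff (by norm_num) |>.mp h3

/-- Key linear algebra for the configuration space cup product: `V` a
`ℚ`-vector space with symplectic basis `{aₖ, bₖ}`, `k ∈ Fin g`, `g > 1`.
If `x, y ∈ V^⊕n` are such that for all `i ≠ j` the tensor
`xⁱ⊗yʲ − yⁱ⊗xʲ` is a scalar multiple of `M = Σₖ aₖ⊗bₖ − bₖ⊗aₖ`, and `x` is a
crossing element (nonzero in at least two coordinates), then in fact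
`xⁱ⊗yʲ = yⁱ⊗xʲ` for all `i ≠ j`, and `x` and `y` are proportional. -/
theorem crossing_cup_product_proportional
    {V : Type*} [AddCommGroup V] [Module ℚ V] {g n : ℕ} (hg : 1 < g)
    (B : Module.Basis (Fin g ⊕ Fin g) ℚ V)
    (x y : Fin n → V)
    (hrel : ∀ i j : Fin n, i ≠ j → ∃ c : ℚ,
      x i ⊗ₜ[ℚ] y j - y i ⊗ₜ[ℚ] x j =
        c • ∑ k : Fin g, (B (Sum.inl k) ⊗ₜ[ℚ] B (Sum.inr k)
          - B (Sum.inr k) ⊗ₜ[ℚ] B (Sum.inl k)))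
    (hcross : ∃ i j : Fin n, i ≠ j ∧ x i ≠ 0 ∧ x j ≠ 0) :
    (∀ i j : Fin n, i ≠ j → x i ⊗ₜ[ℚ] y j = y i ⊗ₜ[ℚ] x j) ∧
    ∃ l m : ℚ, ¬(l = 0 ∧ m = 0) ∧ ∀ i : Fin n, l • x i = m • y i := by
  have key : ∀ i j : Fin n, i ≠ j → x i ⊗ₜ[ℚ] y j = y i ⊗ₜ[ℚ] x j := by
    intro i j hij
    obtain ⟨c, hc⟩ := hrel i j hij
    have hc0 : c = 0 := coeff_zero hg B _ _ _ _ c hc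
    rw [hc0, zero_smul, sub_eq_zero] at hc
    exact hc
  refine ⟨key, ?_⟩
  obtain ⟨i0, j0, hij, hxi, hxj⟩ := hcross
  obtain ⟨f, hf⟩ := exists_functional B hxi
  obtain ⟨fj, hfj⟩ := exists_functional B hxj
  set μ : ℚ := f (y i0) with hμ
  have hy : ∀ j : Fin n, j ≠ i0 → y j = μ • x j := by
    intro j hj
    have := tmul_functional f (key i0 j (Ne.symm hj))
    rwa [hf, one_smul] at this
  have hyi0 : y i0 = μ • x i0 := by
    have h1 := tmul_functional fj (key j0 i0 (Ne.symm hij))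
    rw [hfj, one_smul, hy j0 (Ne.symm hij)] at h1
    rw [h1, map_smul, smul_eq_mul, hfj, mul_one]
  refine ⟨μ, 1, by simp, fun i => ?_⟩
  rw [one_smul]
  by_cases hi : i = i0
  · rw [hi, hyi0]
  · rw [hy i hi]
end

section
/- Let x ∈ V^⊕n with x¹ ≠ 0 and x² ≠ 0, and y ∈ V^⊕n such that xⁱ⊗yʲ = yⁱ⊗xʲ in V⊗V for all i ≠ j. Then there exist scalars λ, μ, not both zero, with λx = μy. -/
/-!
Contracting `xⁱ ⊗ yʲ = yⁱ ⊗ xʲ` in the first factor with a functional `f` normalised by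
`f x¹ = 1` gives `yʲ = f(y¹) • xʲ` for every `j ≠ 1`. Doing the same with a functional `g`
with `g x² = 1` gives `y¹ = g(y²) • x¹`, and `g(y²) = g(f(y¹) • x²) = f(y¹)`, so `y = f(y¹) • x`.
-/

open TensorProduct

theorem LinearMap.apply_smul_eq_of_tmul_eq {R M N : Type*} [CommSemiring R] [AddCommMonoid M]
    [AddCommMonoid N] [Module R M] [Module R N] (f : M →ₗ[R] R) {v v' : M} {w w' : N}
    (h : v ⊗ₜ[R] w = v' ⊗ₜ[R] w') : f v • w = f v' • w' := by
  simpa using congrArg ((TensorProduct.lid R N).toLinearMap ∘ₗ f.rTensor N) h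

section

variable {K V ι : Type*} [Field K] [AddCommGroup V] [Module K V] {x y : ι → V}

theorem eq_smul_of_tmul_symm (hsym : ∀ i j, i ≠ j → x i ⊗ₜ[K] y j = y i ⊗ₜ[K] x j) {i₀ j : ι}
    (hj : i₀ ≠ j) (f : Module.Dual K V) (hf : f (x i₀) = 1) : y j = f (y i₀) • x j := by
  simpa [hf] using f.apply_smul_eq_of_tmul_eq (hsym i₀ j hj)

theorem exists_eq_smul_of_tmul_symm (hsym : ∀ i j, i ≠ j → x i ⊗ₜ[K] y j = y i ⊗ₜ[K] x j)
    {i₀ i₁ : ι} (hi : i₀ ≠ i₁) (hx₀ : x i₀ ≠ 0) (hx₁ : x i₁ ≠ 0) : ∃ c : K, y = c • x := by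
  obtain ⟨f, hf⟩ := Module.Projective.exists_dual_eq_one K hx₀
  obtain ⟨g, hg⟩ := Module.Projective.exists_dual_eq_one K hx₁
  have hy₁ : y i₁ = f (y i₀) • x i₁ := eq_smul_of_tmul_symm hsym hi f hf
  have hy₀ : y i₀ = g (y i₁) • x i₀ := eq_smul_of_tmul_symm hsym hi.symm g hg
  have hgf : g (y i₁) = f (y i₀) := by rw [hy₁, map_smul, hg, smul_eq_mul, mul_one]
  refine ⟨f (y i₀), funext fun j => ?_⟩
  obtain rfl | hj := eq_or_ne i₀ j
  · rw [Pi.smul_apply, ← hgf, ← hy₀]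
  · exact eq_smul_of_tmul_symm hsym hj f hf

end

/-- If `x ∈ V^⊕n` (`n ≥ 2`) has `x¹ ≠ 0` and `x² ≠ 0`, and `y ∈ V^⊕n`
satisfies `xⁱ⊗yʲ = yⁱ⊗xʲ` in `V⊗V` for all `i ≠ j`, then `x` and `y` are
proportional: there are scalars `λ, μ`, not both zero, with `λx = μy`. -/
theorem tensor_symmetry_implies_proportional
    {V : Type*} [AddCommGroup V] [Module ℚ V] {n : ℕ} (hn : 2 ≤ n)
    (x y : Fin n → V)
    (hx1 : x ⟨0, by omega⟩ ≠ 0) (hx2 : x ⟨1, by omega⟩ ≠ 0)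
    (hsym : ∀ i j : Fin n, i ≠ j → x i ⊗ₜ[ℚ] y j = y i ⊗ₜ[ℚ] x j) :
    ∃ l m : ℚ, ¬(l = 0 ∧ m = 0) ∧ ∀ i : Fin n, l • x i = m • y i := by
  obtain ⟨c, rfl⟩ := exists_eq_smul_of_tmul_symm hsym (by simp [Fin.ext_iff]) hx1 hx2
  exact ⟨c, 1, by simp, fun i => by simp⟩
end
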